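/- arXiv:1505.00416 — 4 statements merged into one kernel-verified Lean document; each statement's English description precedes it below -/
import Mathlib

section
/- Let d ≥ 1 and let |Ψ⟩ = Σ_{n=1}^d √p_n |φ_n⟩⊗|ψ_n⟩ be a Schmidt decomposition of a unit vector in H_A ⊗ H_B (so {φ_n} and {ψ_n} are orthonormal families, p_n ≥ 0, Σ_n p_n = 1), let ρ = |Ψ⟩⟨Ψ| and σ₀ = Σ_{n=1}^d p_n |φ_n⟩⟨φ_n| ⊗ |ψ_n⟩⟨ψ_n|. Then d·σ₀ − ρ is positive semidefinite; equivalently, there exists a density matrix μ such that σ₀ = (1/d)ρ + (1 − 1/d)μ. -/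
open Matrix Kronecker
open scoped ComplexOrder

/-- Operator norm of a complex matrix: the norm of the induced operator on Euclidean space. -/
noncomputable def opNorm {n : Type*} [Fintype n] [DecidableEq n]
    (A : Matrix n n ℂ) : ℝ :=
  ‖Matrix.toEuclideanCLM (𝕜 := ℂ) A‖

/-- Matrix logarithm of a Hermitian matrix, defined by functional calculus via the spectral
decomposition (and as `0` on non-Hermitian matrices).  Since `Real.log 0 = 0`, on a positive
semidefinite matrix this is the logarithm on the support. -/
noncomputable def mlog {n : Type*} [Fintype n] [DecidableEq n]
    (A : Matrix n n ℂ) : Matrix n n ℂ :=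
  if hA : A.IsHermitian then
    (hA.eigenvectorUnitary : Matrix n n ℂ) *
      Matrix.diagonal (fun i => (Real.log (hA.eigenvalues i) : ℂ)) *
      (star (hA.eigenvectorUnitary : Matrix n n ℂ))
  else 0

/-- The Lindblad generator `𝓛(ρ) = -i[H,ρ] + Σ_α (L_α ρ L_α† - ½ L_α† L_α ρ - ½ ρ L_α† L_α)`. -/
noncomputable def lindblad {n : Type*} [Fintype n] {ι : Type*} [Fintype ι]
    (H : Matrix n n ℂ) (L : ι → Matrix n n ℂ) (ρ : Matrix n n ℂ) : Matrix n n ℂ :=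
  -(Complex.I) • (H * ρ - ρ * H) +
    ∑ α, (L α * ρ * (L α)ᴴ - (2:ℂ)⁻¹ • ((L α)ᴴ * (L α) * ρ) - (2:ℂ)⁻¹ • (ρ * (L α)ᴴ * (L α)))

/-- Partial trace over the second tensor factor. -/
noncomputable def ptraceR {m p : Type*} [Fintype p]
    (ρ : Matrix (m × p) (m × p) ℂ) : Matrix m m ℂ :=
  Matrix.of fun i j => ∑ b, ρ (i, b) (j, b)

/-- Partial trace over the first tensor factor. -/
noncomputable def ptraceL {m p : Type*} [Fintype m]
    (ρ : Matrix (m × p) (m × p) ℂ) : Matrix p p ℂ :=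
  Matrix.of fun i j => ∑ a, ρ (a, i) (a, j)

/-- A density matrix: positive semidefinite with trace one. -/
noncomputable def IsDensityMatrix {n : Type*} [Fintype n] (ρ : Matrix n n ℂ) : Prop :=
  ρ.PosSemidef ∧ ρ.trace = 1

/-- Von Neumann entropy `S(ρ) = -Tr(ρ ln ρ) = -Σ_i λ_i ln λ_i` (with `0 ln 0 = 0`). -/
noncomputable def vNEntropy {n : Type*} [Fintype n] [DecidableEq n]
    (ρ : Matrix n n ℂ) : ℝ :=
  if h : ρ.IsHermitian then -∑ i, (h.eigenvalues i) * Real.log (h.eigenvalues i) else 0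

lemma psd_outer {n : Type*} [Fintype n] (v : n → ℂ) :
    (Matrix.vecMulVec v (star v)).PosSemidef := by
  rw [Matrix.posSemidef_iff_dotProduct_mulVec]
  constructor
  · ext i j
    simp [Matrix.conjTranspose_apply, Matrix.vecMulVec_apply, mul_comm]
  · intro x
    have h1 : (Matrix.vecMulVec v (star v)) *ᵥ x = (star v ⬝ᵥ x) • v := by
      ext i
      simp [Matrix.mulVec, Matrix.vecMulVec_apply, dotProduct, Finset.mul_sum, mul_assoc,
        Finset.sum_mul, mul_comm, mul_left_comm]
    rw [h1, dotProduct_smul]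
    have h2 : star x ⬝ᵥ v = star (star v ⬝ᵥ x) := by
      simp [dotProduct, mul_comm]
    rw [smul_eq_mul, h2]
    exact mul_star_self_nonneg (star v ⬝ᵥ x)

lemma psd_real_smul {n : Type*} [Fintype n] {M : Matrix n n ℂ} (hM : M.PosSemidef)
    {r : ℝ} (hr : 0 ≤ r) : ((r : ℂ) • M).PosSemidef := by
  rw [Matrix.posSemidef_iff_dotProduct_mulVec]
  constructor
  · ext i j
    simpa [Matrix.conjTranspose_apply, Complex.conj_ofReal] using
      congrArg (fun z => (r:ℂ) * z) (congrFun (congrFun hM.1 i) j)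
  · intro x
    rw [Matrix.smul_mulVec, dotProduct_smul, smul_eq_mul]
    exact mul_nonneg (by exact_mod_cast Complex.zero_le_real.mpr hr) (hM.dotProduct_mulVec_nonneg x)

lemma key_sum {d : ℕ} (A B : Fin d → ℂ) :
    ∑ n, ∑ m, (A n - A m) * (B n - B m) =
      2 * ((d : ℂ) * ∑ n, A n * B n - (∑ n, A n) * (∑ n, B n)) := by
  simp only [sub_mul, mul_sub, Finset.sum_sub_distrib, Finset.sum_const, Finset.card_univ,
    Fintype.card_fin, ← Finset.sum_mul, ← Finset.mul_sum, nsmul_eq_mul]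
  ring

lemma psd_sum {n : Type*} [Fintype n] {ι : Type*} (s : Finset ι) (f : ι → Matrix n n ℂ)
    (hf : ∀ i ∈ s, (f i).PosSemidef) : (∑ i ∈ s, f i).PosSemidef := by
  classical
  induction s using Finset.induction with
  | empty => simpa using Matrix.PosSemidef.zero
  | insert _ _ h ih =>
    rw [Finset.sum_insert h]
    exact (hf _ (Finset.mem_insert_self _ _)).add
      (ih fun i hi => hf i (Finset.mem_insert_of_mem hi))


/-- For a unit vector `Ψ = Σ_n √p_n φ_n ⊗ ψ_n` in Schmidt form, the pure state
`ρ = |Ψ⟩⟨Ψ|` and the separable state `σ₀ = Σ_n p_n |φ_n⟩⟨φ_n| ⊗ |ψ_n⟩⟨ψ_n|` satisfy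
`d σ₀ ≥ ρ`; equivalently `σ₀ = (1/d) ρ + (1 - 1/d) μ` for some density matrix `μ`. -/
theorem schmidt_sep_dominates {dA dB d : ℕ} (hd : 1 ≤ d)
    (φ : Fin d → Fin dA → ℂ) (ψ : Fin d → Fin dB → ℂ) (p : Fin d → ℝ)
    (hφ : ∀ n m, ∑ i, star (φ n i) * φ m i = if n = m then (1 : ℂ) else 0)
    (hψ : ∀ n m, ∑ i, star (ψ n i) * ψ m i = if n = m then (1 : ℂ) else 0)
    (hp0 : ∀ n, 0 ≤ p n) (hp1 : ∑ n, p n = 1)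
    (Ψ : Fin dA × Fin dB → ℂ)
    (hΨ : Ψ = fun q => ∑ n, (Real.sqrt (p n) : ℂ) * φ n q.1 * ψ n q.2)
    (ρ σ₀ : Matrix (Fin dA × Fin dB) (Fin dA × Fin dB) ℂ)
    (hρ : ρ = Matrix.vecMulVec Ψ (star Ψ))
    (hσ₀ : σ₀ = ∑ n, (p n : ℂ) •
      (Matrix.vecMulVec (φ n) (star (φ n)) ⊗ₖ Matrix.vecMulVec (ψ n) (star (ψ n)))) :
    ((d : ℂ) • σ₀ - ρ).PosSemidef ∧
      ∃ μ : Matrix (Fin dA × Fin dB) (Fin dA × Fin dB) ℂ, IsDensityMatrix μ ∧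
        σ₀ = ((d : ℂ))⁻¹ • ρ + (1 - ((d : ℂ))⁻¹) • μ := by
  set w : Fin d → (Fin dA × Fin dB) → ℂ :=
    fun n q => (Real.sqrt (p n) : ℂ) * φ n q.1 * ψ n q.2 with hw
  have hsq : ∀ n, (Real.sqrt (p n) : ℂ) * (Real.sqrt (p n) : ℂ) = (p n : ℂ) := by
    intro n; rw [← Complex.ofReal_mul, Real.mul_self_sqrt (hp0 n)]
  have hΨw : Ψ = fun q => ∑ n, w n q := hΨ
  -- σ₀ as a sum of outer products
  have hσ : σ₀ = ∑ n, Matrix.vecMulVec (w n) (star (w n)) := by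
    rw [hσ₀]
    refine Finset.sum_congr rfl fun n _ => ?_
    ext ⟨i, a⟩ ⟨j, b⟩
    simp only [Matrix.smul_apply, Matrix.kroneckerMap_apply, Matrix.vecMulVec_apply,
      Pi.star_apply, hw, smul_eq_mul, star_mul', Complex.star_def, Complex.conj_ofReal]
    linear_combination (-((starRingEnd ℂ) (φ n j) * φ n i *
      (starRingEnd ℂ) (ψ n b) * ψ n a)) * hsq n
  -- inner products of the w's
  have hinner : ∀ n m, ∑ q, w n q * star (w m q) = if n = m then (p n : ℂ) else 0 := by
    intro n m
    have hfac : ∑ q : Fin dA × Fin dB, w n q * star (w m q)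
        = ((Real.sqrt (p n) : ℂ) * (Real.sqrt (p m) : ℂ)) *
          ((∑ i, star (φ m i) * φ n i) * (∑ a, star (ψ m a) * ψ n a)) := by
      rw [Fintype.sum_prod_type]
      simp only [hw, star_mul', Complex.star_def, Complex.conj_ofReal,
        Finset.mul_sum, Finset.sum_mul]
      rw [Finset.sum_comm]
      refine Finset.sum_congr rfl fun a _ => ?_
      refine Finset.sum_congr rfl fun i _ => ?_
      ring
    rw [hfac, hφ m n, hψ m n]
    by_cases h : n = m
    · subst h; simp [hsq n]
    · simp [Ne.symm h, h]
  -- the key matrix identity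
  have hid : (d : ℂ) • σ₀ - ρ =
      (Complex.ofReal 2⁻¹) • ∑ n, ∑ m, Matrix.vecMulVec (w n - w m) (star (w n - w m)) := by
    rw [hσ, hρ, hΨw]
    ext q r
    simp only [Matrix.sub_apply, Matrix.smul_apply, Matrix.sum_apply, Matrix.vecMulVec_apply,
      Pi.sub_apply, Pi.star_apply, star_sub, smul_eq_mul]
    rw [key_sum (fun n => w n q) (fun n => star (w n r))]
    rw [star_sum]
    push_cast
    ring
  have hSpsd : (∑ n : Fin d, ∑ m : Fin d,
      Matrix.vecMulVec (w n - w m) (star (w n - w m))).PosSemidef :=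
    psd_sum _ _ fun n _ => psd_sum _ _ fun m _ => psd_outer _
  have hpos : ((d : ℂ) • σ₀ - ρ).PosSemidef := by
    rw [hid]; exact psd_real_smul hSpsd (by norm_num)
  -- traces
  have htσ : σ₀.trace = 1 := by
    rw [hσ, Matrix.trace_sum]
    have h3 : ∀ n : Fin d, (Matrix.vecMulVec (w n) (star (w n))).trace = (p n : ℂ) := by
      intro n
      have h4 : (Matrix.vecMulVec (w n) (star (w n))).trace = ∑ q, w n q * star (w n q) := by
        simp [Matrix.trace, Matrix.diag, Matrix.vecMulVec_apply]
      rw [h4, hinner n n]; simp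
    rw [Finset.sum_congr rfl fun n _ => h3 n, ← Complex.ofReal_sum, hp1, Complex.ofReal_one]
  have htρ : ρ.trace = 1 := by
    rw [hρ, hΨw]
    have h1 : (Matrix.vecMulVec (fun q => ∑ n, w n q)
        (star (fun q => ∑ n, w n q))).trace = ∑ q, (∑ n, w n q) * star (∑ m, w m q) := by
      simp [Matrix.trace, Matrix.diag, Matrix.vecMulVec_apply]
    have hq : ∀ q, (∑ n, w n q) * star (∑ m, w m q) = ∑ n, ∑ m, w n q * star (w m q) := by
      intro q
      rw [star_sum, Finset.sum_mul_sum]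
    have h2 : ∑ q, (∑ n, w n q) * star (∑ m, w m q)
        = ∑ n, ∑ m, ∑ q, w n q * star (w m q) := by
      simp only [hq]
      rw [Finset.sum_comm]
      exact Finset.sum_congr rfl fun n _ => Finset.sum_comm
    rw [h1, h2]
    simp only [hinner, Finset.sum_ite_eq, Finset.mem_univ, if_true]
    rw [← Complex.ofReal_sum, hp1, Complex.ofReal_one]
  have hσpsd : σ₀.PosSemidef := by
    rw [hσ]; exact psd_sum _ _ fun n _ => psd_outer _
  refine ⟨hpos, ?_⟩
  rcases eq_or_lt_of_le hd with h1 | h2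
  · -- d = 1 : σ₀ = ρ
    have hd1 : (d : ℂ) = 1 := by rw [← h1]; norm_num
    have hS0 : (∑ n : Fin d, ∑ m : Fin d,
        Matrix.vecMulVec (w n - w m) (star (w n - w m))) = 0 := by
      subst h1
      rw [Fin.sum_univ_one, Fin.sum_univ_one, sub_self]
      ext i j
      simp [Matrix.vecMulVec_apply]
    have hσρ : σ₀ = ρ := by
      have h5 := hid
      rw [hS0, smul_zero, hd1, one_smul, sub_eq_zero] at h5
      exact h5
    exact ⟨σ₀, ⟨hσpsd, htσ⟩, by rw [hd1]; simp [hσρ]⟩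
  · -- d ≥ 2
    have hd0 : (d : ℂ) ≠ 0 := Nat.cast_ne_zero.mpr (by omega)
    have hne : (1 - (d : ℂ)⁻¹) ≠ 0 := by
      have hd1 : (d : ℂ) ≠ 1 := by
        intro h
        have : d = 1 := by exact_mod_cast h
        omega
      rw [sub_ne_zero]
      intro h
      exact hd1 (inv_eq_one.mp h.symm)
    refine ⟨(1 - (d : ℂ)⁻¹)⁻¹ • ((d : ℂ)⁻¹ • ((d : ℂ) • σ₀ - ρ)), ⟨?_, ?_⟩, ?_⟩
    · -- positive semidefinite
      have e2 : (1 - (d : ℂ)⁻¹)⁻¹ = ((((1 : ℝ) - (d : ℝ)⁻¹)⁻¹ : ℝ) : ℂ) := by push_cast; ring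
      have e1 : ((d : ℂ))⁻¹ = (((d : ℝ)⁻¹ : ℝ) : ℂ) := by push_cast; ring
      rw [e2, e1]
      have hd2 : (1:ℝ) ≤ (d:ℝ) := by exact_mod_cast hd
      refine psd_real_smul (psd_real_smul hpos ?_) ?_
      · positivity
      · have h6 : (d:ℝ)⁻¹ ≤ 1 := by
          rw [inv_le_one_iff₀]; right; exact hd2
        have h0 : (0:ℝ) ≤ 1 - (d:ℝ)⁻¹ := by linarith
        positivity
    · -- trace one
      rw [Matrix.trace_smul, Matrix.trace_smul, Matrix.trace_sub, Matrix.trace_smul,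
        htσ, htρ, smul_eq_mul, smul_eq_mul, smul_eq_mul]
      have h7 : (d:ℂ)⁻¹ * ((d:ℂ) * 1 - 1) = 1 - (d:ℂ)⁻¹ := by field_simp
      rw [h7, inv_mul_cancel₀ hne]
    · -- the convex combination
      rw [smul_inv_smul₀ hne, smul_sub, smul_smul, inv_mul_cancel₀ hd0, one_smul]
      abel
end

section
/- Let 0 < p < 1. Let Y be an n×n positive definite matrix whose largest and smallest eigenvalues satisfy λ_max(Y)/λ_min(Y) ≤ p^{−2}, let X be positive semidefinite, let L satisfy ‖L‖ ≤ 1, and let P be Hermitian with 0 ≤ P ≤ I. Then |Tr(P [L X, ln Y])| ≤ 18 · Tr(X) · ln(1/p). -/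
open Matrix Kronecker
open scoped ComplexOrder

section aux
open scoped Matrix.Norms.L2Operator

variable {n : ℕ}

lemma opNorm_eq_norm (A : Matrix (Fin n) (Fin n) ℂ) : opNorm A = ‖A‖ := rfl

lemma opNorm_nonneg (A : Matrix (Fin n) (Fin n) ℂ) : 0 ≤ opNorm A := norm_nonneg _

lemma opNorm_mul_le (A B : Matrix (Fin n) (Fin n) ℂ) :
    opNorm (A * B) ≤ opNorm A * opNorm B := by
  simpa [opNorm_eq_norm] using Matrix.l2_opNorm_mul A B

lemma opNorm_conj_unitary (U : Matrix.unitaryGroup (Fin n) ℂ) (A : Matrix (Fin n) (Fin n) ℂ) :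
    opNorm ((U : Matrix (Fin n) (Fin n) ℂ) * A * star (U : Matrix (Fin n) (Fin n) ℂ))
      = opNorm A := by
  simp only [opNorm_eq_norm]
  rw [mul_assoc, CStarRing.norm_coe_unitary_mul U (A * star (U : Matrix (Fin n) (Fin n) ℂ))]
  exact CStarRing.norm_mul_coe_unitary A (star U)

lemma opNorm_unitary_conj (U : Matrix.unitaryGroup (Fin n) ℂ) (A : Matrix (Fin n) (Fin n) ℂ) :
    opNorm (star (U : Matrix (Fin n) (Fin n) ℂ) * A * (U : Matrix (Fin n) (Fin n) ℂ))
      = opNorm A := by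
  simp only [opNorm_eq_norm]
  rw [mul_assoc]
  rw [CStarRing.norm_mem_unitary_mul (A * (U : Matrix (Fin n) (Fin n) ℂ)) (Unitary.star_mem U.2)]
  exact CStarRing.norm_mul_coe_unitary A U

lemma opNorm_diagonal_le (d : Fin n → ℂ) (C : ℝ) (hC : 0 ≤ C)
    (h : ∀ i, ‖d i‖ ≤ C) : opNorm (Matrix.diagonal d) ≤ C := by
  refine ContinuousLinearMap.opNorm_le_bound _ hC fun x => ?_
  have hx : ∀ i, (Matrix.toEuclideanCLM (𝕜 := ℂ) (Matrix.diagonal d) x) i = d i * x i := by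
    intro i
    have h2 := congrFun (Matrix.ofLp_toEuclideanCLM (Matrix.diagonal d) x) i
    simpa [Matrix.toLin'_apply, Matrix.mulVec_diagonal] using h2
  rw [EuclideanSpace.norm_eq, EuclideanSpace.norm_eq]
  rw [← Real.sqrt_sq hC, ← Real.sqrt_mul (by positivity)]
  apply Real.sqrt_le_sqrt
  rw [Finset.mul_sum]
  apply Finset.sum_le_sum
  intro i _
  rw [hx i]
  have h1 : ‖d i * x i‖ ≤ C * ‖x i‖ := by
    rw [norm_mul]
    exact mul_le_mul_of_nonneg_right (h i) (norm_nonneg _)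
  calc ‖d i * x i‖ ^ 2 ≤ (C * ‖x i‖) ^ 2 := by
        exact pow_le_pow_left₀ (norm_nonneg _) h1 2
    _ = C ^ 2 * ‖x i‖ ^ 2 := by ring

lemma abs_apply_le_opNorm (A : Matrix (Fin n) (Fin n) ℂ) (i : Fin n) :
    ‖A i i‖ ≤ opNorm A := by
  classical
  set x : EuclideanSpace ℂ (Fin n) := EuclideanSpace.single i 1 with hxdef
  set v : EuclideanSpace ℂ (Fin n) := Matrix.toEuclideanCLM (𝕜 := ℂ) A x with hvdef
  have hvi : v i = A i i := by
    have h2 := congrFun (Matrix.ofLp_toEuclideanCLM A x) i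
    rw [hxdef, EuclideanSpace.ofLp_single, Matrix.mulVec_single] at h2
    rw [hvdef]
    exact h2.trans (by simp)
  have h3 : ‖v i‖ ≤ ‖v‖ := by
    have := norm_inner_le_norm (𝕜 := ℂ) (EuclideanSpace.single i (1:ℂ)) v
    rw [EuclideanSpace.inner_single_left] at this
    simpa [EuclideanSpace.norm_single] using this
  have h4 : ‖v‖ ≤ opNorm A := by
    have h5 : ‖v‖ ≤ opNorm A * ‖x‖ := ContinuousLinearMap.le_opNorm _ x
    rw [hxdef, EuclideanSpace.norm_single, norm_one, mul_one] at h5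
    exact h5
  rw [← hvi]
  exact h3.trans h4


lemma trace_eq_sum_eigs (A : Matrix (Fin n) (Fin n) ℂ) (hA : A.IsHermitian) :
    A.trace = ∑ i, (hA.eigenvalues i : ℂ) := by
  conv_lhs => rw [hA.spectral_theorem, Unitary.conjStarAlgAut_apply]
  rw [Matrix.trace_mul_cycle, Unitary.coe_star_mul_self, one_mul, Matrix.trace_diagonal]
  simp [Function.comp]

lemma trace_re_nonneg {X : Matrix (Fin n) (Fin n) ℂ} (hX : X.PosSemidef) :
    0 ≤ X.trace.re := by
  rw [trace_eq_sum_eigs X hX.1]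
  simp only [Complex.re_sum, Complex.ofReal_re]
  exact Finset.sum_nonneg fun i _ => hX.eigenvalues_nonneg i

lemma abs_trace_mul_le (A : Matrix (Fin n) (Fin n) ℂ) {X : Matrix (Fin n) (Fin n) ℂ}
    (hX : X.PosSemidef) :
    ‖(A * X).trace‖ ≤ opNorm A * X.trace.re := by
  classical
  have hH := hX.1
  set U := hH.eigenvectorUnitary with hU
  set d := hH.eigenvalues with hd
  set B := star (U : Matrix (Fin n) (Fin n) ℂ) * A * (U : Matrix (Fin n) (Fin n) ℂ) with hB
  have h1 : (A * X).trace = ∑ i, B i i * (d i : ℂ) := by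
    conv_lhs => rw [hH.spectral_theorem, Unitary.conjStarAlgAut_apply]
    rw [show A * ((U : Matrix (Fin n) (Fin n) ℂ) * Matrix.diagonal (RCLike.ofReal ∘ d) *
        star (U : Matrix (Fin n) (Fin n) ℂ)) =
        (A * (U : Matrix (Fin n) (Fin n) ℂ) * Matrix.diagonal (RCLike.ofReal ∘ d)) *
        star (U : Matrix (Fin n) (Fin n) ℂ) by noncomm_ring]
    rw [Matrix.trace_mul_comm, show star (U : Matrix (Fin n) (Fin n) ℂ) *
        (A * (U : Matrix (Fin n) (Fin n) ℂ) * Matrix.diagonal (RCLike.ofReal ∘ d)) =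
        B * Matrix.diagonal (RCLike.ofReal ∘ d) by rw [hB]; noncomm_ring]
    simp [Matrix.trace, Matrix.diag, Matrix.mul_diagonal, Function.comp]
  have h2 : X.trace.re = ∑ i, d i := by
    rw [trace_eq_sum_eigs X hH]
    simp [Complex.re_sum, hd]
  rw [h1, h2]
  calc ‖∑ i, B i i * (d i : ℂ)‖ ≤ ∑ i, ‖B i i * (d i : ℂ)‖ :=
        norm_sum_le _ _
    _ ≤ ∑ i, opNorm A * d i := by
        apply Finset.sum_le_sum
        intro i _
        rw [norm_mul]
        have h3 : ‖((d i : ℝ) : ℂ)‖ = d i := by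
          rw [Complex.norm_real, Real.norm_of_nonneg (hX.eigenvalues_nonneg i)]
        rw [h3]
        have h4 : ‖B i i‖ ≤ opNorm A := by
          have h5 := abs_apply_le_opNorm B i
          rwa [hB, opNorm_unitary_conj U A] at h5
        exact mul_le_mul_of_nonneg_right h4 (hX.eigenvalues_nonneg i)
    _ = opNorm A * ∑ i, d i := by rw [← Finset.mul_sum]

lemma eigenvalues_le_one {P : Matrix (Fin n) (Fin n) ℂ} (hP : P.IsHermitian)
    (h1 : ((1 : Matrix (Fin n) (Fin n) ℂ) - P).PosSemidef) (i : Fin n) :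
    hP.eigenvalues i ≤ 1 := by
  set v : Fin n → ℂ := ⇑(hP.eigenvectorBasis i) with hv
  have h2 := h1.dotProduct_mulVec_nonneg v
  have hPv : P *ᵥ v = ((hP.eigenvalues i : ℂ)) • v := by
    rw [hv, hP.mulVec_eigenvectorBasis, RCLike.real_smul_eq_coe_smul (K := ℂ)]
    rfl
  have hvv : dotProduct (star v) v = 1 := by
    have h6 : (inner ℂ (hP.eigenvectorBasis i) (hP.eigenvectorBasis i) : ℂ) = 1 := by
      rw [inner_self_eq_norm_sq_to_K, hP.eigenvectorBasis.orthonormal.1 i]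
      norm_num
    rwa [EuclideanSpace.inner_eq_star_dotProduct, dotProduct_comm] at h6
  have h3 : dotProduct (star v) (((1 : Matrix (Fin n) (Fin n) ℂ) - P) *ᵥ v)
      = 1 - (hP.eigenvalues i : ℂ) := by
    rw [Matrix.sub_mulVec, Matrix.one_mulVec, dotProduct_sub, hPv,
      dotProduct_smul, hvv]
    simp
  rw [h3] at h2
  have h4 : ((1 - hP.eigenvalues i : ℝ) : ℂ) = 1 - (hP.eigenvalues i : ℂ) := by push_cast; ring
  rw [← h4] at h2
  have h5 : (0:ℝ) ≤ 1 - hP.eigenvalues i := by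
    rwa [← Complex.ofReal_zero, Complex.real_le_real] at h2
  linarith

lemma opNorm_le_one_of_le_one {P : Matrix (Fin n) (Fin n) ℂ} (hP : P.IsHermitian)
    (hP0 : P.PosSemidef) (hP1 : ((1 : Matrix (Fin n) (Fin n) ℂ) - P).PosSemidef) :
    opNorm P ≤ 1 := by
  conv_lhs => rw [hP.spectral_theorem, Unitary.conjStarAlgAut_apply]
  rw [opNorm_conj_unitary]
  apply opNorm_diagonal_le _ 1 zero_le_one
  intro i
  have h0 := hP0.eigenvalues_nonneg i
  have h1 := eigenvalues_le_one hP hP1 i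
  have h2 : ‖((RCLike.ofReal ∘ hP.eigenvalues) i : ℂ)‖ = |hP.eigenvalues i| := by
    simp [Function.comp]
  rw [h2, abs_of_nonneg h0]
  exact h1

lemma opNorm_sub_le (A B : Matrix (Fin n) (Fin n) ℂ) :
    opNorm (A - B) ≤ opNorm A + opNorm B := by
  simp only [opNorm_eq_norm]
  exact norm_sub_le A B

lemma trace_comm_shift (M P L X : Matrix (Fin n) (Fin n) ℂ) (c : ℂ) :
    (P * ((L * X) * (M + c • 1) - (M + c • 1) * (L * X))).trace
      = ((M * P * L - P * M * L) * X).trace := by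
  have e1 : P * ((L * X) * (M + c • 1) - (M + c • 1) * (L * X))
      = P * (L * X) * M - P * M * (L * X) := by
    simp only [Matrix.mul_add, Matrix.add_mul, mul_smul_comm, smul_mul_assoc, one_mul, mul_one]
    noncomm_ring
  rw [e1, Matrix.sub_mul, Matrix.trace_sub, Matrix.trace_sub]
  congr 1
  · rw [Matrix.trace_mul_cycle]
    congr 1
    noncomm_ring
  · congr 1
    noncomm_ring

end aux

/-- If `0 < p < 1`, `Y` is positive definite with `λ_max(Y)/λ_min(Y) ≤ p^{-2}`, `X` is positive
semidefinite, `‖L‖ ≤ 1` and `0 ≤ P ≤ I` is Hermitian, then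
`|Tr(P [L X, ln Y])| ≤ 18 · Tr(X) · ln(1/p)`. -/
theorem abs_trace_commutator_LX_log_le {n : ℕ} (p : ℝ) (hp0 : 0 < p) (hp1 : p < 1)
    (X Y L P : Matrix (Fin n) (Fin n) ℂ)
    (hY : Y.PosDef)
    (hspec : (⨆ i, hY.isHermitian.eigenvalues i) / (⨅ i, hY.isHermitian.eigenvalues i) ≤ p⁻¹ ^ 2)
    (hX : X.PosSemidef) (hL : opNorm L ≤ 1)
    (hP : P.IsHermitian) (hP0 : P.PosSemidef)
    (hP1 : ((1 : Matrix (Fin n) (Fin n) ℂ) - P).PosSemidef) :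
    ‖(P * ((L * X) * mlog Y - mlog Y * (L * X))).trace‖ ≤
      18 * X.trace.re * Real.log (1 / p) := by

  rcases Nat.eq_zero_or_pos n with hn | hn
  · subst hn
    simp [Matrix.trace]
  · haveI : Nonempty (Fin n) := Fin.pos_iff_nonempty.mp hn
    set ev := hY.isHermitian.eigenvalues with hev
    set U := hY.isHermitian.eigenvectorUnitary with hU
    have hpos : ∀ i, 0 < ev i := fun i => hY.eigenvalues_pos i
    set lmin := ⨅ i, ev i with hlmin
    set lmax := ⨆ i, ev i with hlmax
    obtain ⟨i0, hi0⟩ := Finite.exists_min ev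
    have hminpos : 0 < lmin := lt_of_lt_of_le (hpos i0) (le_ciInf hi0)
    have hub : ∀ i, ev i ≤ lmax := fun i =>
      le_ciSup (Set.Finite.bddAbove (Set.finite_range ev)) i
    have hlb : ∀ i, lmin ≤ ev i := fun i =>
      ciInf_le (Set.Finite.bddBelow (Set.finite_range ev)) i
    have hmaxpos : 0 < lmax := lt_of_lt_of_le (hpos i0) (hub i0)
    have hlogp : 0 ≤ Real.log (1 / p) := by
      apply Real.log_nonneg
      rw [le_div_iff₀ hp0]
      linarith
    set c := Real.log lmin with hc
    have hkey : ∀ i, Real.log (ev i) - c ≤ 2 * Real.log (1 / p) := by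
      intro i
      have h1 : Real.log (ev i) ≤ Real.log lmax := Real.log_le_log (hpos i) (hub i)
      have h2 : Real.log lmax - Real.log lmin = Real.log (lmax / lmin) :=
        (Real.log_div hmaxpos.ne' hminpos.ne').symm
      have h3 : Real.log (lmax / lmin) ≤ Real.log (p⁻¹ ^ 2) :=
        Real.log_le_log (div_pos hmaxpos hminpos) hspec
      have h4 : Real.log (p⁻¹ ^ 2) = 2 * Real.log (1 / p) := by
        rw [Real.log_pow, one_div]
        push_cast
        ring
      linarith
    have hkey0 : ∀ i, 0 ≤ Real.log (ev i) - c := fun i =>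
      sub_nonneg.mpr (Real.log_le_log hminpos (hlb i))
    set D : Matrix (Fin n) (Fin n) ℂ :=
      Matrix.diagonal (fun i => ((Real.log (ev i) - c : ℝ) : ℂ)) with hD
    set M : Matrix (Fin n) (Fin n) ℂ :=
      (U : Matrix (Fin n) (Fin n) ℂ) * D * star (U : Matrix (Fin n) (Fin n) ℂ) with hM
    have hUU : (U : Matrix (Fin n) (Fin n) ℂ) * star (U : Matrix (Fin n) (Fin n) ℂ) = 1 :=
      Matrix.mem_unitaryGroup_iff.mp U.2
    have hmlog : mlog Y = M + (c : ℂ) • 1 := by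
      simp only [mlog, dif_pos hY.isHermitian]
      have hdiag : D + Matrix.diagonal (fun _ : Fin n => (c : ℂ))
          = Matrix.diagonal (fun i => (Real.log (ev i) : ℂ)) := by
        rw [hD, Matrix.diagonal_add]
        congr 1
        funext i
        push_cast
        ring
      have hconst : Matrix.diagonal (fun _ : Fin n => (c : ℂ)) = (c : ℂ) • 1 :=
        (Matrix.smul_one_eq_diagonal (c : ℂ)).symm
      rw [← hdiag, Matrix.mul_add, Matrix.add_mul, hconst, mul_smul_comm, smul_mul_assoc,
        mul_one, hUU, hM]
    have hMnorm : opNorm M ≤ 2 * Real.log (1 / p) := by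
      rw [hM, opNorm_conj_unitary U D, hD]
      apply opNorm_diagonal_le _ _ (by linarith)
      intro i
      rw [Complex.norm_real, Real.norm_of_nonneg (hkey0 i)]
      exact hkey i
    set A := M * P * L - P * M * L with hA
    have htrace : (P * ((L * X) * mlog Y - mlog Y * (L * X))).trace = (A * X).trace := by
      rw [hmlog, trace_comm_shift M P L X (c : ℂ), hA]
    rw [htrace]
    have hPle : opNorm P ≤ 1 := opNorm_le_one_of_le_one hP hP0 hP1
    have hAle : opNorm A ≤ 4 * Real.log (1 / p) := by
      have t1 : opNorm (M * P * L) ≤ opNorm M := by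
        calc opNorm (M * P * L) ≤ opNorm (M * P) * opNorm L := opNorm_mul_le _ _
          _ ≤ opNorm (M * P) * 1 := mul_le_mul_of_nonneg_left hL (opNorm_nonneg _)
          _ = opNorm (M * P) := mul_one _
          _ ≤ opNorm M * opNorm P := opNorm_mul_le _ _
          _ ≤ opNorm M * 1 := mul_le_mul_of_nonneg_left hPle (opNorm_nonneg _)
          _ = opNorm M := mul_one _
      have t2 : opNorm (P * M * L) ≤ opNorm M := by
        calc opNorm (P * M * L) ≤ opNorm (P * M) * opNorm L := opNorm_mul_le _ _
          _ ≤ opNorm (P * M) * 1 := mul_le_mul_of_nonneg_left hL (opNorm_nonneg _)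
          _ = opNorm (P * M) := mul_one _
          _ ≤ opNorm P * opNorm M := opNorm_mul_le _ _
          _ ≤ 1 * opNorm M := mul_le_mul_of_nonneg_right hPle (opNorm_nonneg _)
          _ = opNorm M := one_mul _
      have t3 : opNorm A ≤ opNorm (M * P * L) + opNorm (P * M * L) := by
        rw [hA]
        exact opNorm_sub_le _ _
      linarith
    have htr0 : 0 ≤ X.trace.re := trace_re_nonneg hX
    calc ‖(A * X).trace‖ ≤ opNorm A * X.trace.re := abs_trace_mul_le A hX
      _ ≤ (4 * Real.log (1 / p)) * X.trace.re := mul_le_mul_of_nonneg_right hAle htr0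
      _ ≤ 18 * X.trace.re * Real.log (1 / p) := by nlinarith
end

section
/- Let X, Y be n×n Hermitian matrices with 0 ≤ X ≤ Y and Y positive definite, and let L be an n×n matrix with ‖L‖ ≤ 1. Then Tr(L† L · X Y^{−1} X) ≤ Tr X. -/
set_option maxHeartbeats 2000000


open Matrix Kronecker
open scoped ComplexOrder

lemma psd_trace_nonneg {n : ℕ} {M : Matrix (Fin n) (Fin n) ℂ} (hM : M.PosSemidef) :
    0 ≤ M.trace := by
  rw [Matrix.trace]
  refine Finset.sum_nonneg fun i _ => ?_
  simpa [Matrix.mulVec, dotProduct, Pi.single_apply] using hM.dotProduct_mulVec_nonneg (Pi.single i 1)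

lemma one_sub_conj_mul_psd {n : ℕ} {L : Matrix (Fin n) (Fin n) ℂ} (hL : opNorm L ≤ 1) :
    (1 - Lᴴ * L).PosSemidef := by
  refine Matrix.PosSemidef.of_dotProduct_mulVec_nonneg ?_ ?_
  · exact (Matrix.isHermitian_one).sub (Matrix.isHermitian_conjTranspose_mul_self L)
  intro x
  rw [Matrix.sub_mulVec, dotProduct_sub, Matrix.one_mulVec,
    ← Matrix.mulVec_mulVec, Matrix.dotProduct_mulVec, Matrix.vecMul_conjTranspose, star_star]
  have key : ∑ i, ‖(L *ᵥ x) i‖ ^ 2 ≤ ∑ i, ‖x i‖ ^ 2 := by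
    have h1 : ‖(WithLp.equiv 2 (Fin n → ℂ)).symm (L *ᵥ x)‖
        ≤ ‖(WithLp.equiv 2 (Fin n → ℂ)).symm x‖ := by
      have h0 : (WithLp.equiv 2 (Fin n → ℂ)).symm (L *ᵥ x)
          = Matrix.toEuclideanCLM (𝕜 := ℂ) L ((WithLp.equiv 2 (Fin n → ℂ)).symm x) := by
        exact (Matrix.toEuclideanCLM_toLp L x).symm
      rw [h0]
      calc ‖Matrix.toEuclideanCLM (𝕜 := ℂ) L ((WithLp.equiv 2 (Fin n → ℂ)).symm x)‖
          ≤ opNorm L * ‖(WithLp.equiv 2 (Fin n → ℂ)).symm x‖ :=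
            (Matrix.toEuclideanCLM (𝕜 := ℂ) L).le_opNorm _
        _ ≤ 1 * ‖(WithLp.equiv 2 (Fin n → ℂ)).symm x‖ :=
            mul_le_mul_of_nonneg_right hL (norm_nonneg _)
        _ = _ := one_mul _
    simp only [EuclideanSpace.norm_eq, WithLp.equiv_symm_apply, PiLp.toLp_apply] at h1
    exact (Real.sqrt_le_sqrt_iff (by positivity)).mp h1
  have hv : ∀ v : Fin n → ℂ, star v ⬝ᵥ v = ((∑ i, ‖v i‖ ^ 2 : ℝ) : ℂ) := by
    intro v
    simp only [dotProduct, Pi.star_apply, Complex.ofReal_sum]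
    congr 1; funext i
    rw [Complex.star_def, mul_comm, RCLike.mul_conj]
    norm_cast
  rw [hv, hv, ← Complex.ofReal_sub, Complex.zero_le_real]
  linarith

open scoped MatrixOrder in
lemma psd_sqrt_exists {n : ℕ} {A : Matrix (Fin n) (Fin n) ℂ} (hA : A.PosSemidef) :
    ∃ S : Matrix (Fin n) (Fin n) ℂ, S.PosSemidef ∧ S * S = A :=
  ⟨CFC.sqrt A, (CFC.sqrt_nonneg A).posSemidef, CFC.sqrt_mul_sqrt_self A hA.nonneg⟩

/-- If `0 ≤ X ≤ Y`, `Y` is positive definite and `‖L‖ ≤ 1`, then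
`Tr(L† L · X Y⁻¹ X) ≤ Tr X`. -/
theorem trace_conj_le_trace {n : ℕ} (X Y L : Matrix (Fin n) (Fin n) ℂ)
    (hX : X.PosSemidef) (hXY : (Y - X).PosSemidef) (hY : Y.PosDef)
    (hL : opNorm L ≤ 1) :
    ((Lᴴ * L * (X * Y⁻¹ * X)).trace).re ≤ (X.trace).re := by
  obtain ⟨R, hRpsd, hRR⟩ : ∃ R : Matrix (Fin n) (Fin n) ℂ, R.PosSemidef ∧ R * R = Y :=
    psd_sqrt_exists hY.posSemidef
  have hRH : Rᴴ = R := hRpsd.1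
  have hdetR : IsUnit R.det := by
    rw [isUnit_iff_ne_zero]
    intro h
    apply hY.det_pos.ne'
    rw [← hRR, Matrix.det_mul, h, mul_zero]
  have hRRi : R * R⁻¹ = 1 := Matrix.mul_nonsing_inv _ hdetR
  have hRiR : R⁻¹ * R = 1 := Matrix.nonsing_inv_mul _ hdetR
  have hYinv : Y⁻¹ = R⁻¹ * R⁻¹ := by rw [← hRR, Matrix.mul_inv_rev]
  have hRinvH : (R⁻¹)ᴴ = R⁻¹ := by rw [Matrix.conjTranspose_nonsing_inv, hRH]
  have hcan1 : ∀ t : Matrix (Fin n) (Fin n) ℂ, R * (R⁻¹ * t) = t := fun t => by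
    rw [← Matrix.mul_assoc, hRRi, Matrix.one_mul]
  have hcan2 : ∀ t : Matrix (Fin n) (Fin n) ℂ, R⁻¹ * (R * t) = t := fun t => by
    rw [← Matrix.mul_assoc, hRiR, Matrix.one_mul]
  set B := X * R⁻¹ with hBdef
  have hBH : Bᴴ = R⁻¹ * X := by rw [hBdef, Matrix.conjTranspose_mul, hRinvH, hX.1]
  have hC : X * Y⁻¹ * X = B * Bᴴ := by
    rw [hBH, hBdef, hYinv]
    simp only [Matrix.mul_assoc]
  -- A := R⁻¹ X R⁻¹
  set A := R⁻¹ * X * R⁻¹ with hAdef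
  have hApsd : A.PosSemidef := by
    have := hX.mul_mul_conjTranspose_same R⁻¹
    rwa [hRinvH] at this
  have hOneSubA : (1 - A).PosSemidef := by
    have h := hXY.mul_mul_conjTranspose_same R⁻¹
    rw [hRinvH] at h
    have e : R⁻¹ * (Y - X) * R⁻¹ = 1 - A := by
      rw [Matrix.mul_sub, Matrix.sub_mul]
      congr 1
      · rw [← hRR]
        simp only [Matrix.mul_assoc, hcan2]
        exact hRRi
    rwa [e] at h
  obtain ⟨S, hSpsd, hSS⟩ : ∃ S : Matrix (Fin n) (Fin n) ℂ, S.PosSemidef ∧ S * S = A :=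
    psd_sqrt_exists hApsd
  have hSH : Sᴴ = S := hSpsd.1
  have hAsubA2 : (A - A * A).PosSemidef := by
    have h := hOneSubA.mul_mul_conjTranspose_same S
    rw [hSH] at h
    have e : S * (1 - A) * S = A - A * A := by
      rw [Matrix.mul_sub, Matrix.mul_one, Matrix.sub_mul, hSS, ← hSS]
      congr 1
      simp only [Matrix.mul_assoc]
    rwa [e] at h
  have hXC : (X - X * Y⁻¹ * X).PosSemidef := by
    have h := hAsubA2.mul_mul_conjTranspose_same R
    rw [hRH] at h
    have e : R * (A - A * A) * R = X - X * Y⁻¹ * X := by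
      rw [Matrix.mul_sub, Matrix.sub_mul, hC, hBH, hBdef, hAdef]
      congr 1
      · simp only [Matrix.mul_assoc, hcan1]
        rw [hRiR, Matrix.mul_one]
      · simp only [Matrix.mul_assoc, hcan1]
        rw [hRiR, Matrix.mul_one]
    rwa [e] at h
  -- trace inequalities over ℂ
  have t1 : (X * Y⁻¹ * X).trace ≤ X.trace := by
    have h := psd_trace_nonneg hXC
    rw [Matrix.trace_sub] at h
    exact sub_nonneg.mp h
  have t2 : (Lᴴ * L * (X * Y⁻¹ * X)).trace ≤ (X * Y⁻¹ * X).trace := by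
    have hpsd := (one_sub_conj_mul_psd hL).conjTranspose_mul_mul_same B
    have h := psd_trace_nonneg hpsd
    have e1 : Bᴴ * (1 - Lᴴ * L) * B = Bᴴ * B - Bᴴ * (Lᴴ * L) * B := by
      rw [Matrix.mul_sub, Matrix.mul_one, Matrix.sub_mul]
    have etr1 : (Bᴴ * B).trace = (B * Bᴴ).trace := Matrix.trace_mul_comm _ _
    have etr2 : (Bᴴ * (Lᴴ * L) * B).trace = (Lᴴ * L * (B * Bᴴ)).trace := by
      rw [Matrix.trace_mul_cycle Bᴴ (Lᴴ * L) B,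
        Matrix.trace_mul_comm (B * Bᴴ) (Lᴴ * L)]
    rw [e1, Matrix.trace_sub, etr1, etr2] at h
    rw [hC]
    exact sub_nonneg.mp h
  exact (Complex.le_def.mp (t2.trans t1)).1
end

section
/- Let ρ be a density matrix on H₁ ⊗ H₂ where H₂ has dimension d₂, and let ρ₁ = Tr₂ ρ be its partial trace over the second factor. Then ρ ≤ d₂ · (ρ₁ ⊗ I₂); equivalently, there exists a density matrix μ on H₁ ⊗ H₂ such that ρ₁ ⊗ (I₂/d₂) = (1/d₂²) ρ + (1 − 1/d₂²) μ. -/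
open Matrix Kronecker
open scoped ComplexOrder

section AuxRTI

open Matrix Kronecker
open scoped ComplexOrder

private lemma rti_cs_aux {d : ℕ} (f : Fin d → ℂ) :
    Complex.normSq (∑ b, f b) ≤ (d : ℝ) * ∑ b, Complex.normSq (f b) := by
  have h1 : ‖∑ b, f b‖ ≤ ∑ b, ‖f b‖ := by
    simpa using norm_sum_le (Finset.univ) f
  have h2 : (∑ b, ‖f b‖) ^ 2 ≤ (d : ℝ) * ∑ b, (‖f b‖) ^ 2 := by
    simpa using sq_sum_le_card_mul_sum_sq (s := Finset.univ) (f := fun b => ‖f b‖)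
  calc Complex.normSq (∑ b, f b) = (‖∑ b, f b‖)^2 := (Complex.sq_norm _).symm
    _ ≤ (∑ b, ‖f b‖) ^ 2 := by
        exact pow_le_pow_left₀ (norm_nonneg _) h1 2
    _ ≤ (d : ℝ) * ∑ b, (‖f b‖) ^ 2 := h2
    _ = (d : ℝ) * ∑ b, Complex.normSq (f b) := by simp [Complex.sq_norm]

private lemma rti_quad_gram {l m : Type*} [Fintype l] [Fintype m] (A : Matrix l m ℂ)
    (v : m → ℂ) :
    star v ⬝ᵥ ((Aᴴ * A) *ᵥ v) = ((∑ k, Complex.normSq ((A *ᵥ v) k) : ℝ) : ℂ) := by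
  rw [← mulVec_mulVec, dotProduct_mulVec, ← star_mulVec]
  simp [dotProduct, Complex.normSq_eq_conj_mul_self]

private def rti_emb {d₁ d₂ : ℕ} (c : Fin d₂) (x : Fin d₁ → ℂ) : Fin d₁ × Fin d₂ → ℂ :=
  fun p => if p.2 = c then x p.1 else 0

private lemma rti_L1 {d₁ d₂ : ℕ} (N : Matrix (Fin d₁) (Fin d₁) ℂ) (v : Fin d₁ × Fin d₂ → ℂ) :
    star v ⬝ᵥ ((N ⊗ₖ (1 : Matrix (Fin d₂) (Fin d₂) ℂ)) *ᵥ v) =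
      ∑ b, star (fun i => v (i, b)) ⬝ᵥ (N *ᵥ fun i => v (i, b)) := by
  simp only [dotProduct, mulVec, kroneckerMap_apply, Matrix.one_apply, Fintype.sum_prod_type,
    Pi.star_apply, mul_ite, mul_one, mul_zero, ite_mul, zero_mul]
  simp only [Finset.sum_ite_eq, Finset.mem_univ, if_true]
  exact Finset.sum_comm

private lemma rti_L2 {d₁ d₂ : ℕ} (ρ : Matrix (Fin d₁ × Fin d₂) (Fin d₁ × Fin d₂) ℂ)
    (x : Fin d₁ → ℂ) :
    star x ⬝ᵥ (ptraceR ρ *ᵥ x) = ∑ c, star (rti_emb c x) ⬝ᵥ (ρ *ᵥ rti_emb c x) := by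
  simp only [dotProduct, mulVec, ptraceR, Matrix.of_apply, rti_emb, Fintype.sum_prod_type,
    Pi.star_apply, apply_ite star, star_zero, mul_ite, mul_zero, ite_mul, zero_mul]
  simp only [Finset.sum_ite_eq', Finset.mem_univ, if_true]
  rw [Finset.sum_comm]
  refine Finset.sum_congr rfl fun i _ => ?_
  simp only [Finset.sum_mul, Finset.mul_sum]
  rw [Finset.sum_comm]

private lemma rti_L4 {d₁ d₂ : ℕ} (v : Fin d₁ × Fin d₂ → ℂ) :
    v = ∑ b, rti_emb b (fun i => v (i, b)) := by
  funext p
  simp [rti_emb, Finset.sum_apply]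

end AuxRTI

/-- For a density matrix `ρ` on `H₁ ⊗ H₂` with `ρ₁ = Tr₂ ρ`, one has
`ρ ≤ d₂ · (ρ₁ ⊗ I₂)`; equivalently there is a density matrix `μ` with
`ρ₁ ⊗ (I₂/d₂) = (1/d₂²) ρ + (1 - 1/d₂²) μ`. -/
theorem reduced_tensor_identity_dominates {d₁ d₂ : ℕ}
    (ρ : Matrix (Fin d₁ × Fin d₂) (Fin d₁ × Fin d₂) ℂ) (hρ : IsDensityMatrix ρ) :
    ((d₂ : ℂ) • (ptraceR ρ ⊗ₖ (1 : Matrix (Fin d₂) (Fin d₂) ℂ)) - ρ).PosSemidef ∧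
      ∃ μ : Matrix (Fin d₁ × Fin d₂) (Fin d₁ × Fin d₂) ℂ, IsDensityMatrix μ ∧
        ptraceR ρ ⊗ₖ (((d₂ : ℂ))⁻¹ • (1 : Matrix (Fin d₂) (Fin d₂) ℂ)) =
          (((d₂ : ℂ)) ^ 2)⁻¹ • ρ + (1 - (((d₂ : ℂ)) ^ 2)⁻¹) • μ := by
  obtain ⟨hpsd, htr⟩ := hρ
  -- the reduced state is Hermitian
  have hherm1 : (ptraceR ρ).IsHermitian := by
    ext i j
    simp only [conjTranspose_apply, ptraceR, Matrix.of_apply, star_sum]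
    exact Finset.sum_congr rfl fun b _ => hpsd.isHermitian.apply (i, b) (j, b)
  have hhermK : (ptraceR ρ ⊗ₖ (1 : Matrix (Fin d₂) (Fin d₂) ℂ)).IsHermitian := by
    ext ⟨i, b⟩ ⟨j, b'⟩
    simp only [conjTranspose_apply, kroneckerMap_apply, star_mul', Matrix.one_apply]
    by_cases h : b' = b
    · subst h; simp [hherm1.apply]
    · rw [if_neg h, if_neg (fun hh => h hh.symm)]
      simp
  set K := ptraceR ρ ⊗ₖ (1 : Matrix (Fin d₂) (Fin d₂) ℂ) with hK
  -- positivity of the difference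
  obtain ⟨A, hAeq⟩ := by open scoped MatrixOrder in exact CStarAlgebra.nonneg_iff_eq_star_mul_self.mp hpsd.nonneg
  have hhermdK : ((d₂ : ℂ) • K).IsHermitian := by
    show ((d₂ : ℂ) • K)ᴴ = _
    rw [conjTranspose_smul, hhermK.eq, star_natCast]
  have hSherm : ((d₂ : ℂ) • K - ρ).IsHermitian :=
    IsHermitian.sub hhermdK hpsd.isHermitian
  have hquad : ∀ y : Fin d₁ × Fin d₂ → ℂ,
      star y ⬝ᵥ (ρ *ᵥ y) = ((∑ k, Complex.normSq ((A *ᵥ y) k) : ℝ) : ℂ) := by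
    intro y; rw [hAeq]; exact rti_quad_gram A y
  have hSpos : ((d₂ : ℂ) • K - ρ).PosSemidef := by
    refine PosSemidef.of_dotProduct_mulVec_nonneg hSherm fun v => ?_
    set F : Fin d₂ → Fin d₂ → (Fin d₁ × Fin d₂) → ℂ :=
      fun b c => A *ᵥ rti_emb c (fun i => v (i, b)) with hF
    have e1 : star v ⬝ᵥ (((d₂ : ℂ) • K) *ᵥ v) =
        (((d₂ : ℝ) * ∑ b, ∑ c, ∑ k, Complex.normSq (F b c k) : ℝ) : ℂ) := by
      rw [smul_mulVec, dotProduct_smul, hK, rti_L1]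
      have : ∀ b : Fin d₂, star (fun i => v (i, b)) ⬝ᵥ (ptraceR ρ *ᵥ fun i => v (i, b)) =
          ((∑ c, ∑ k, Complex.normSq (F b c k) : ℝ) : ℂ) := by
        intro b
        rw [rti_L2]
        calc ∑ c, star (rti_emb c fun i => v (i, b)) ⬝ᵥ (ρ *ᵥ rti_emb c fun i => v (i, b))
            = ∑ c, ((∑ k, Complex.normSq (F b c k) : ℝ) : ℂ) :=
              Finset.sum_congr rfl fun c _ => hquad _
          _ = _ := by push_cast; ring
      simp only [this, smul_eq_mul]
      push_cast
      ring
    have hAv : A *ᵥ v = ∑ b, F b b := by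
      conv_lhs => rw [rti_L4 v]
      calc A *ᵥ ∑ b, rti_emb b (fun i => v (i, b))
          = ∑ b, A *ᵥ rti_emb b (fun i => v (i, b)) := by
            simp only [← Matrix.mulVecLin_apply]
            exact map_sum A.mulVecLin _ Finset.univ
        _ = ∑ b, F b b := rfl
    have e2 : star v ⬝ᵥ (ρ *ᵥ v) =
        ((∑ k, Complex.normSq (∑ b, F b b k) : ℝ) : ℂ) := by
      rw [hquad v, hAv]
      norm_cast
      exact Finset.sum_congr rfl fun k _ => by rw [Finset.sum_apply]
    rw [sub_mulVec, dotProduct_sub, e1, e2, ← Complex.ofReal_sub]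
    rw [Complex.zero_le_real, sub_nonneg]
    calc ∑ k, Complex.normSq (∑ b, F b b k)
        ≤ ∑ k, ((d₂ : ℝ) * ∑ b, Complex.normSq (F b b k)) :=
          Finset.sum_le_sum fun k _ => rti_cs_aux _
      _ = (d₂ : ℝ) * ∑ b, ∑ k, Complex.normSq (F b b k) := by
          rw [← Finset.mul_sum, Finset.sum_comm]
      _ ≤ (d₂ : ℝ) * ∑ b, ∑ c, ∑ k, Complex.normSq (F b c k) := by
          gcongr with b _
          exact Finset.single_le_sum
            (f := fun c => ∑ k, Complex.normSq (F b c k))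
            (fun c _ => Finset.sum_nonneg fun k _ => Complex.normSq_nonneg _)
            (Finset.mem_univ b)
  refine ⟨hSpos, ?_⟩
  -- dimensions are positive
  have hd₂ : d₂ ≠ 0 := by
    rintro rfl
    rw [Matrix.trace] at htr
    simp [Finset.univ_eq_empty] at htr
  -- traces
  have htr1 : (ptraceR ρ).trace = 1 := by
    rw [← htr]
    simp [Matrix.trace, ptraceR, Matrix.diag, Fintype.sum_prod_type]
  have htrK : K.trace = (d₂ : ℂ) := by
    rw [hK, trace_kronecker, htr1, trace_one]
    simp
  rcases eq_or_lt_of_le (Nat.one_le_iff_ne_zero.mpr hd₂) with h1 | h2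
  · -- d₂ = 1
    subst h1
    refine ⟨ρ, ⟨hpsd, htr⟩, ?_⟩
    have hone : K = ρ := by
      ext ⟨i, b⟩ ⟨j, b'⟩
      obtain rfl : b = b' := Subsingleton.elim _ _
      simp [hK, ptraceR, Matrix.one_apply, Subsingleton.elim b 0]
    rw [Matrix.kronecker_smul, ← hK, hone]
    norm_num
  · -- d₂ ≥ 2
    have hd₂R : (1 : ℝ) < (d₂ : ℝ) := by exact_mod_cast h2
    have hne : ((d₂ : ℝ) ^ 2 - 1) ≠ 0 := by nlinarith
    have hnn : (0 : ℝ) ≤ ((d₂ : ℝ) ^ 2 - 1)⁻¹ := by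
      apply inv_nonneg.mpr; nlinarith
    set c : ℝ := ((d₂ : ℝ) ^ 2 - 1)⁻¹ with hc
    have hcC : (c : ℂ) = ((d₂ : ℂ) ^ 2 - 1)⁻¹ := by
      rw [hc, Complex.ofReal_inv]
      push_cast
      ring_nf
    have hcast : ((d₂ : ℂ) ^ 2 - 1) = (((d₂ : ℝ) ^ 2 - 1 : ℝ) : ℂ) := by push_cast; ring
    have hneC : ((d₂ : ℂ) ^ 2 - 1) ≠ 0 := by
      rw [hcast]
      exact Complex.ofReal_ne_zero.mpr hne
    have hd₂C : (d₂ : ℂ) ≠ 0 := Nat.cast_ne_zero.mpr hd₂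
    refine ⟨(c : ℂ) • ((d₂ : ℂ) • K - ρ), ⟨PosSemidef.of_dotProduct_mulVec_nonneg ?_ ?_, ?_⟩, ?_⟩
    · show ((c : ℂ) • ((d₂ : ℂ) • K - ρ))ᴴ = _
      rw [conjTranspose_smul, hSherm.eq, Complex.star_def, Complex.conj_ofReal]
    · intro x
      rw [smul_mulVec, dotProduct_smul, smul_eq_mul]
      exact mul_nonneg (Complex.zero_le_real.mpr hnn) (hSpos.dotProduct_mulVec_nonneg x)
    · rw [trace_smul, trace_sub, trace_smul, htrK, htr]
      rw [smul_eq_mul, smul_eq_mul, hcC]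
      field_simp
    · have hkr : ptraceR ρ ⊗ₖ (((d₂ : ℂ))⁻¹ • (1 : Matrix (Fin d₂) (Fin d₂) ℂ)) =
          ((d₂ : ℂ))⁻¹ • K := by
        rw [hK, Matrix.kronecker_smul]
      rw [hkr]
      match_scalars <;> (rw [hcC]; field_simp; try ring)
end
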